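/- (ETF doubling, signature version) Let n > d ≥ 1, set c = (n−2d)·√((n−1)/(d(n−d))), and suppose |c| ≤ 1. Let ε = ±1 and β = −c + ε·i·√(1−c²). If S is the signature matrix of an equiangular tight frame of size d × n, then the 2n × 2n block matrix Σ = [[S, S + β·I], [S + β̄·I, −S]] is the signature matrix of a complex equiangular tight frame of size n × 2n. -/

import Mathlib

/-!
The Gram matrix of a `d × n` ETF with signature matrix `S` is `G = 1 + μ S`, and tightness
`G² = (n/d) G` is equivalent to `S² = (n - 1) 1 + c S` with `c = (n - 2d)/(dμ)`; this is the `c`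
of the statement since `√((n - 1)/(d(n - d))) = 1/(dμ)`. Conversely, a Hermitian matrix `A` of
size `m` with zero diagonal, unimodular off-diagonal entries and this quadratic relation for a
`k × m` ETF is a signature matrix: the relation makes `(k/m)(1 + μ A)` an orthogonal projection
of trace `k`, which factors as `Vᴴ V` with `V Vᴴ = 1`, and `√(m/k) V` is the frame. For the
block matrix `Σ`, the facts `β + β̄ = -2c` and `β β̄ = 1` give `Σ² = (2n - 1) 1`, which is
exactly this relation for an `n × 2n` ETF, whose linear coefficient `2n - 2n` vanishes.
-/

open Matrix

/-- The Welch bound parameter `μ = √((n−d)/(d(n−1)))`. -/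
noncomputable def etfMu (d n : ℕ) : ℝ :=
  Real.sqrt (((n : ℝ) - d) / (d * ((n : ℝ) - 1)))

/-- `F` is an equiangular tight frame: unit-norm columns, pairwise inner products of
modulus equal to the Welch bound, and `F Fᴴ = (n/d) I`. -/
def IsETF {ι κ : Type} [Fintype ι] [Fintype κ] [DecidableEq ι] [DecidableEq κ]
    (F : Matrix ι κ ℂ) : Prop :=
  (∀ j, (Fᴴ * F) j j = 1) ∧
  (∀ j k : κ, j ≠ k →
    ‖(Fᴴ * F) j k‖ = etfMu (Fintype.card ι) (Fintype.card κ)) ∧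
  F * Fᴴ = ((Fintype.card κ : ℂ) / (Fintype.card ι : ℂ)) • 1

/-- `S` is the signature matrix of the ETF `F`, i.e. `S = (1/μ)(Fᴴ F − I)`. -/
def IsSignatureOf {ι κ : Type} [Fintype ι] [Fintype κ] [DecidableEq ι] [DecidableEq κ]
    (S : Matrix κ κ ℂ) (F : Matrix ι κ ℂ) : Prop :=
  IsETF F ∧ S = ((etfMu (Fintype.card ι) (Fintype.card κ) : ℝ) : ℂ)⁻¹ • (Fᴴ * F - 1)

/-- A Hadamard matrix: `±1` entries and `Hᵀ H = m I`. -/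
def IsHadamard {ι : Type} [Fintype ι] [DecidableEq ι] (H : Matrix ι ι ℝ) : Prop :=
  (∀ i j, H i j = 1 ∨ H i j = -1) ∧ Hᵀ * H = (Fintype.card ι : ℝ) • 1

/-- A skew Hadamard matrix: `H = C + I` with `Cᵀ = −C`. -/
def IsSkewHadamard {ι : Type} [Fintype ι] [DecidableEq ι] (H : Matrix ι ι ℝ) : Prop :=
  _root_.IsHadamard H ∧ (H - 1)ᵀ = -(H - 1)

open Fintype

section Welch

variable {d n : ℕ}

lemma etfMu_pos (hd : 0 < d) (hdn : d < n) : 0 < etfMu d n := by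
  have hd' : (1 : ℝ) ≤ d := by exact_mod_cast hd
  have hdn' : (d : ℝ) < n := by exact_mod_cast hdn
  exact Real.sqrt_pos.mpr (div_pos (by linarith) (mul_pos (by linarith) (by linarith)))

lemma etfMu_sq_mul (hμ : etfMu d n ≠ 0) : etfMu d n ^ 2 * (d * (n - 1)) = n - d := by
  have hpos := Real.sqrt_ne_zero'.mp hμ
  have hden : (d : ℝ) * (n - 1) ≠ 0 := fun h0 => by simp [h0] at hpos
  rw [etfMu, Real.sq_sqrt hpos.le, div_mul_cancel₀ _ hden]

lemma sqrt_div_eq_inv_mul_etfMu (hd : 0 < d) (hdn : d < n) :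
    Real.sqrt ((n - 1) / (d * (n - d))) = (d * etfMu d n)⁻¹ := by
  have hμ := etfMu_pos hd hdn
  have hdn' : (d : ℝ) < n := by exact_mod_cast hdn
  have hnd : (n : ℝ) - d ≠ 0 := sub_ne_zero.mpr hdn'.ne'
  rw [Real.sqrt_eq_iff_mul_self_eq_of_pos (by positivity)]
  field_simp
  linear_combination -etfMu_sq_mul hμ.ne'

end Welch

namespace Matrix.IsHermitian

variable {𝕜 ι : Type*} [RCLike 𝕜] [Fintype ι] [DecidableEq ι] {Q : Matrix ι ι 𝕜}

lemma eigenvalues_eq_zero_or_one (hQ : Q.IsHermitian) (hQQ : IsIdempotentElem Q) (i : ι) :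
    hQ.eigenvalues i = 0 ∨ hQ.eigenvalues i = 1 := by
  set v : ι → 𝕜 := ⇑(hQ.eigenvectorBasis i)
  set t := hQ.eigenvalues i
  have hv : Q *ᵥ v = t • v := hQ.mulVec_eigenvectorBasis i
  have hv0 : v ≠ 0 := (WithLp.ofLp_eq_zero 2).ne.2 <| hQ.eigenvectorBasis.orthonormal.ne_zero i
  have hQv : Q *ᵥ (Q *ᵥ v) = Q *ᵥ v := by rw [mulVec_mulVec, hQQ.eq]
  rw [hv, mulVec_smul, hv, smul_smul] at hQv
  have ht : t * t = t := smul_left_injective ℝ hv0 hQv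
  rcases mul_eq_zero.mp (show t * (t - 1) = 0 by linear_combination ht) with h | h
  · exact .inl h
  · exact .inr (by linarith)

lemma trace_eq_card_eigenvalues_eq_one (hQ : Q.IsHermitian) (hQQ : IsIdempotentElem Q) :
    Q.trace = Fintype.card {i // hQ.eigenvalues i = 1} := by
  rw [hQ.trace_eq_sum_eigenvalues, Fintype.card_subtype, Finset.card_eq_sum_ones,
    Nat.cast_sum, Finset.sum_filter]
  refine Finset.sum_congr rfl fun i _ => ?_
  rcases hQ.eigenvalues_eq_zero_or_one hQQ i with h | h <;> simp [h]

lemma exists_conjTranspose_mul_self_eq (hQ : Q.IsHermitian) (hQQ : IsIdempotentElem Q)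
    {k : ℕ} (htr : Q.trace = k) :
    ∃ V : Matrix (Fin k) ι 𝕜, Vᴴ * V = Q ∧ V * Vᴴ = 1 := by
  set U : Matrix ι ι 𝕜 := ↑hQ.eigenvectorUnitary
  have hspec : Q = U * diagonal (RCLike.ofReal ∘ hQ.eigenvalues) * Uᴴ := hQ.spectral_theorem
  have hUU : Uᴴ * U = 1 := Unitary.coe_star_mul_self _
  clear_value U
  let T := {i // hQ.eigenvalues i = 1}
  have hk : Fintype.card T = k := by
    exact_mod_cast (hQ.trace_eq_card_eigenvalues_eq_one hQQ).symm.trans htr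
  let e : Fin k ≃ T := (Fintype.equivFinOfCardEq hk).symm
  let f : Fin k → ι := fun a => e a
  have hf : Function.Injective f := Subtype.val_injective.comp e.injective
  refine ⟨Uᴴ.submatrix f id, ?_, ?_⟩
  · ext j l
    rw [hspec, conjTranspose_submatrix, conjTranspose_conjTranspose, mul_apply, mul_apply]
    simp only [mul_diagonal, submatrix_apply, id, Function.comp_apply]
    calc ∑ a, U j (f a) * Uᴴ (f a) l = ∑ t : T, U j t * Uᴴ t l :=
          Fintype.sum_equiv e _ _ fun _ => rfl
      _ = ∑ i with hQ.eigenvalues i = 1, U j i * Uᴴ i l :=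
          (Finset.sum_subtype _ (fun _ => Finset.mem_filter_univ _) fun i => U j i * Uᴴ i l).symm
      _ = _ := by
          rw [Finset.sum_filter]
          refine Finset.sum_congr rfl fun i _ => ?_
          rcases hQ.eigenvalues_eq_zero_or_one hQQ i with h | h <;> simp [h]
  · rw [conjTranspose_submatrix, conjTranspose_conjTranspose,
      ← submatrix_mul _ _ _ _ _ Function.bijective_id, hUU, submatrix_one _ hf]

end Matrix.IsHermitian

lemma one_add_smul_mul_self_eq_iff {κ : Type*} [Fintype κ] [DecidableEq κ]
    {A : Matrix κ κ ℂ} {d n μ : ℂ} (hd : d ≠ 0) (hμ : μ ≠ 0)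
    (hμd : μ ^ 2 * (d * (n - 1)) = n - d) :
    (1 + μ • A) * (1 + μ • A) = (n / d) • (1 + μ • A) ↔
      A * A = (n - 1) • 1 + ((n - 2 * d) / (d * μ)) • A := by
  have key : (1 + μ • A) * (1 + μ • A) - (n / d) • (1 + μ • A)
      = μ ^ 2 • (A * A - ((n - 1) • 1 + ((n - 2 * d) / (d * μ)) • A)) := by
    simp only [mul_add, add_mul, Matrix.smul_mul, Matrix.mul_smul, Matrix.one_mul,
      Matrix.mul_one, smul_smul]
    match_scalars
    · field_simp
      linear_combination hμd
    · field_simp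
      ring
    · ring
  rw [← sub_eq_zero, key, smul_eq_zero, sub_eq_zero, or_iff_right (pow_ne_zero 2 hμ)]

section Signature

variable {ι κ : Type} [Fintype ι] [Fintype κ] [DecidableEq ι] [DecidableEq κ]
  {S : Matrix κ κ ℂ} {F : Matrix ι κ ℂ}

lemma IsETF.gram_mul_self (hF : IsETF F) :
    (Fᴴ * F) * (Fᴴ * F) = ((card κ : ℂ) / card ι) • (Fᴴ * F) := by
  rw [Matrix.mul_assoc, ← Matrix.mul_assoc F, hF.2.2, Matrix.smul_mul, Matrix.one_mul,
    Matrix.mul_smul]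

namespace IsSignatureOf

lemma isHermitian (hS : IsSignatureOf S F) : S.IsHermitian := by
  rw [hS.2]
  refine ((isHermitian_conjTranspose_mul_self F).sub isHermitian_one).smul ?_
  rw [← Complex.ofReal_inv]
  exact Complex.conj_ofReal _

lemma apply_self (hS : IsSignatureOf S F) (j : κ) : S j j = 0 := by
  simp [hS.2, hS.1.1 j]

lemma gram_eq (hS : IsSignatureOf S F) (hd : 0 < card ι) (hdn : card ι < card κ) :
    Fᴴ * F = 1 + (etfMu (card ι) (card κ) : ℂ) • S := by
  have hμ : (etfMu (card ι) (card κ) : ℂ) ≠ 0 := by exact_mod_cast (etfMu_pos hd hdn).ne'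
  rw [hS.2, smul_smul, mul_inv_cancel₀ hμ, one_smul, add_sub_cancel]

lemma norm_apply_of_ne (hS : IsSignatureOf S F) (hd : 0 < card ι) (hdn : card ι < card κ)
    {j k : κ} (hjk : j ≠ k) : ‖S j k‖ = 1 := by
  have hpos := etfMu_pos hd hdn
  rw [hS.2, Matrix.smul_apply, Matrix.sub_apply, one_apply_ne hjk, sub_zero, smul_eq_mul,
    norm_mul, norm_inv, Complex.norm_real, Real.norm_of_nonneg hpos.le, hS.1.2.1 j k hjk,
    inv_mul_cancel₀ hpos.ne']

lemma mul_self (hS : IsSignatureOf S F) (hd : 0 < card ι) (hdn : card ι < card κ) :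
    S * S = ((card κ : ℂ) - 1) • 1
      + (((card κ : ℂ) - 2 * card ι) / (card ι * etfMu (card ι) (card κ))) • S := by
  have hμ := (etfMu_pos hd hdn).ne'
  refine (one_add_smul_mul_self_eq_iff (by exact_mod_cast hd.ne') (by exact_mod_cast hμ)
    (by exact_mod_cast etfMu_sq_mul hμ)).mp ?_
  rw [← hS.gram_eq hd hdn]
  exact hS.1.gram_mul_self

end IsSignatureOf

end Signature

section Converse

variable {ι κ : Type} [Fintype ι] [Fintype κ] [DecidableEq ι] [DecidableEq κ]
  {A : Matrix κ κ ℂ}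

lemma isSignatureOf_of_gram_eq {F : Matrix ι κ ℂ} (hd : 0 < card ι) (hdn : card ι < card κ)
    (hA0 : ∀ i, A i i = 0) (hA1 : ∀ i j, i ≠ j → ‖A i j‖ = 1)
    (hG : Fᴴ * F = 1 + (etfMu (card ι) (card κ) : ℂ) • A)
    (htight : F * Fᴴ = ((card κ : ℂ) / card ι) • 1) :
    IsSignatureOf A F := by
  have hμ := etfMu_pos hd hdn
  refine ⟨⟨fun j => by simp [hG, hA0 j], fun j k hjk => ?_, htight⟩, ?_⟩
  · rw [hG, Matrix.add_apply, one_apply_ne hjk, zero_add, Matrix.smul_apply, smul_eq_mul,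
      norm_mul, Complex.norm_real, Real.norm_of_nonneg hμ.le, hA1 j k hjk, mul_one]
  · rw [hG, add_sub_cancel_left, smul_smul, inv_mul_cancel₀ (by exact_mod_cast hμ.ne'),
      one_smul]

lemma exists_isSignatureOf_of_mul_self (k : ℕ) (hk : 0 < k) (hkn : k < card κ)
    (hA : A.IsHermitian) (hA0 : ∀ i, A i i = 0) (hA1 : ∀ i j, i ≠ j → ‖A i j‖ = 1)
    (hAA : A * A = ((card κ : ℂ) - 1) • 1
      + (((card κ : ℂ) - 2 * k) / (k * etfMu k (card κ))) • A) :
    ∃ Φ : Matrix (Fin k) κ ℂ, IsSignatureOf A Φ := by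
  set m := card κ
  set μ := etfMu k m
  have hμ := etfMu_pos hk hkn
  have hk' : (k : ℂ) ≠ 0 := by exact_mod_cast hk.ne'
  have hm' : (m : ℂ) ≠ 0 := by exact_mod_cast (hk.trans hkn).ne'
  set G := 1 + (μ : ℂ) • A
  have hGG : G * G = ((m : ℂ) / k) • G :=
    (one_add_smul_mul_self_eq_iff hk' (by exact_mod_cast hμ.ne')
      (by exact_mod_cast etfMu_sq_mul hμ.ne')).mpr hAA
  have hGH : G.IsHermitian := isHermitian_one.add (hA.smul (Complex.conj_ofReal _))
  have htrG : G.trace = m := by simp [G, m, trace, hA0]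
  have hQH : (((k : ℂ) / m) • G).IsHermitian := hGH.smul (by simp [IsSelfAdjoint])
  have hQQ : IsIdempotentElem (((k : ℂ) / m) • G) := by
    rw [IsIdempotentElem, Matrix.smul_mul, Matrix.mul_smul, hGG, smul_smul, smul_smul]
    congr 1
    field_simp
  have htrQ : (((k : ℂ) / m) • G).trace = k := by
    rw [trace_smul, htrG, smul_eq_mul, div_mul_cancel₀ _ hm']
  obtain ⟨V, hVV, hVV'⟩ := hQH.exists_conjTranspose_mul_self_eq hQQ htrQ
  set s : ℂ := ((Real.sqrt (m / k) : ℝ) : ℂ)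
  have hss : star s * s = m / k := by
    rw [Complex.star_def, Complex.conj_ofReal, ← Complex.ofReal_mul,
      Real.mul_self_sqrt (by positivity)]
    push_cast
    rfl
  refine ⟨s • V, isSignatureOf_of_gram_eq (by simpa using hk) (by simpa using hkn) hA0 hA1
    ?_ ?_⟩
  · rw [conjTranspose_smul, Matrix.smul_mul, Matrix.mul_smul, smul_smul, hss, hVV, smul_smul,
      div_mul_div_cancel₀ hk', div_self hm', one_smul, Fintype.card_fin]
  · rw [conjTranspose_smul, Matrix.smul_mul, Matrix.mul_smul, smul_smul, mul_comm, hss, hVV',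
      Fintype.card_fin]

end Converse

section Doubling

variable {κ : Type*} [DecidableEq κ] {S : Matrix κ κ ℂ} {β : ℂ}

def signatureDoubling (S : Matrix κ κ ℂ) (β : ℂ) : Matrix (κ ⊕ κ) (κ ⊕ κ) ℂ :=
  fromBlocks S (S + β • 1) (S + starRingEnd ℂ β • 1) (-S)

lemma isHermitian_signatureDoubling (hS : S.IsHermitian) :
    (signatureDoubling S β).IsHermitian := by
  refine hS.fromBlocks ?_ hS.neg
  rw [conjTranspose_add, conjTranspose_smul, conjTranspose_one, hS.eq]
  rfl

lemma signatureDoubling_apply_self (hS0 : ∀ j, S j j = 0) (p : κ ⊕ κ) :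
    signatureDoubling S β p p = 0 := by
  rcases p with j | j <;> simp [signatureDoubling, hS0 j]

lemma norm_signatureDoubling_apply_of_ne (hS0 : ∀ j, S j j = 0)
    (hS1 : ∀ j k, j ≠ k → ‖S j k‖ = 1) (hβ : ‖β‖ = 1) {p q : κ ⊕ κ}
    (hpq : p ≠ q) :
    ‖signatureDoubling S β p q‖ = 1 := by
  rcases p with j | j <;> rcases q with k | k <;>
    obtain rfl | hjk := eq_or_ne j k <;>
    simp_all [signatureDoubling, one_apply_ne]

lemma signatureDoubling_mul_self [Fintype κ] {a c : ℂ} (hSS : S * S = a • 1 + c • S)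
    (hβc : β + starRingEnd ℂ β = -(2 * c)) (hβ : ‖β‖ = 1) :
    signatureDoubling S β * signatureDoubling S β = (2 * a + 1) • 1 := by
  have hββ : β * starRingEnd ℂ β = 1 := by
    rw [Complex.mul_conj, Complex.normSq_eq_norm_sq, hβ]; norm_num
  rw [signatureDoubling, fromBlocks_multiply, ← fromBlocks_one, fromBlocks_smul, smul_zero]
  congr 1 <;>
    simp only [mul_add, add_mul, Matrix.smul_mul, Matrix.mul_smul, Matrix.one_mul,
      Matrix.mul_one, smul_smul, mul_neg, neg_mul, neg_neg, hSS] <;>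
    match_scalars <;> first | ring1 | linear_combination hββ | linear_combination hβc

end Doubling

lemma norm_neg_add_mul_I_sqrt {c ε : ℝ} (hc : |c| ≤ 1) (hε : ε = 1 ∨ ε = -1) :
    ‖-(c : ℂ) + ε * Complex.I * (Real.sqrt (1 - c ^ 2) : ℂ)‖ = 1 := by
  have hs := Real.sq_sqrt (sub_nonneg.mpr ((sq_le_one_iff_abs_le_one c).mpr hc))
  have hε2 : ε ^ 2 = 1 := by rcases hε with rfl | rfl <;> norm_num
  have hβ : -(c : ℂ) + ε * Complex.I * (Real.sqrt (1 - c ^ 2) : ℂ)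
      = ⟨-c, ε * Real.sqrt (1 - c ^ 2)⟩ := by
    apply Complex.ext <;> simp
  rw [hβ, Complex.norm_def, Real.sqrt_eq_one, Complex.normSq_mk]
  linear_combination ε ^ 2 * hs + (1 - c ^ 2) * hε2

lemma neg_add_mul_I_sqrt_add_conj (c ε : ℝ) :
    -(c : ℂ) + ε * Complex.I * (Real.sqrt (1 - c ^ 2) : ℂ)
      + starRingEnd ℂ (-(c : ℂ) + ε * Complex.I * (Real.sqrt (1 - c ^ 2) : ℂ))
      = -(2 * c) := by
  rw [Complex.add_conj]
  simp

/-- **ETF doubling (signature version).** Let `n > d ≥ 1`, `c = (n−2d)·√((n−1)/(d(n−d)))`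
with `|c| ≤ 1`, `ε = ±1`, and `β = −c + ε·i·√(1−c²)`. If `S` is the signature matrix of an
ETF of size `d × n`, then the `2n × 2n` block matrix `Σ = [[S, S+βI], [S+β̄I, −S]]` is the
signature matrix of a complex ETF of size `n × 2n`. -/
theorem etf_doubling_signature (d n : ℕ) (hd : 1 ≤ d) (hdn : d < n)
    (c : ℝ) (hc : c = ((n : ℝ) - 2 * d) * Real.sqrt (((n : ℝ) - 1) / (d * ((n : ℝ) - d))))
    (hc1 : |c| ≤ 1)
    (ε : ℝ) (hε : ε = 1 ∨ ε = -1)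
    (β : ℂ) (hβ : β = -(c : ℂ) + (ε : ℂ) * Complex.I * ((Real.sqrt (1 - c ^ 2) : ℝ) : ℂ))
    (F : Matrix (Fin d) (Fin n) ℂ) (S : Matrix (Fin n) (Fin n) ℂ)
    (hS : IsSignatureOf S F) :
    ∃ Φ : Matrix (Fin n) (Fin n ⊕ Fin n) ℂ,
      IsSignatureOf
        (Matrix.fromBlocks S (S + β • 1) (S + (starRingEnd ℂ β) • 1) (-S)) Φ := by
  have hd' : 0 < card (Fin d) := by rwa [card_fin]
  have hdn' : card (Fin d) < card (Fin n) := by rwa [card_fin, card_fin]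
  have hSS : S * S = ((n : ℂ) - 1) • 1 + (c : ℂ) • S := by
    have hcμ : (c : ℂ) = ((n : ℂ) - 2 * d) / (d * etfMu d n) := by
      rw [hc, sqrt_div_eq_inv_mul_etfMu hd hdn]
      push_cast
      ring
    simpa only [hcμ, card_fin] using hS.mul_self hd' hdn'
  have hβn : ‖β‖ = 1 := hβ ▸ norm_neg_add_mul_I_sqrt hc1 hε
  have hβc : β + starRingEnd ℂ β = -(2 * c) := hβ ▸ neg_add_mul_I_sqrt_add_conj c ε
  refine exists_isSignatureOf_of_mul_self (A := signatureDoubling S β) n (by omega)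
    (by rw [card_sum, card_fin]; omega) (isHermitian_signatureDoubling hS.isHermitian)
    (signatureDoubling_apply_self hS.apply_self)
    (fun p q => norm_signatureDoubling_apply_of_ne hS.apply_self
      (fun j k => hS.norm_apply_of_ne hd' hdn') hβn) ?_
  rw [signatureDoubling_mul_self hSS hβc hβn, card_sum, card_fin]
  push_cast
  rw [show (n : ℂ) + n - 2 * n = 0 by ring, zero_div, zero_smul, add_zero]
  congr 1
  ring
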